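/- arXiv:2007.13716 — 3 statements merged into one kernel-verified Lean document; each statement's English description precedes it below -/
import Mathlib

section
/- Let H be a real Hilbert space, g ∈ H, σ > 0, and let ψ : H → ℝ be a convex function. Suppose h : H → ℝ is defined by h(v) = (1/2)·( √(‖v‖² + σ²) − ⟨g, v⟩ )₊² + ψ(v), where x₊ = max(x,0). Then h is convex. -/
open RealInnerProductSpace

/-! `√(‖v‖² + c²)` is the Euclidean norm of `(v, c)`, hence convex as a norm composed with an
affine map. Subtracting the linear form `⟪g, ·⟫` and taking the positive part keep convexity,
and squaring a nonnegative convex function keeps it as well. -/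

lemma convexOn_sqrt_norm_sq_add_sq {E : Type*} [NormedAddCommGroup E] [NormedSpace ℝ E]
    (c : ℝ) : ConvexOn ℝ Set.univ fun v : E => √(‖v‖ ^ 2 + c ^ 2) := by
  let A : E →ᵃ[ℝ] WithLp 2 (E × ℝ) :=
    ((WithLp.linearEquiv 2 ℝ (E × ℝ)).symm.toLinearMap ∘ₗ .inl ℝ E ℝ).toAffineMap +
      .const ℝ E (WithLp.toLp 2 (0, c))
  have hA (v : E) : ‖A v‖ = √(‖v‖ ^ 2 + c ^ 2) := by
    simp [A, WithLp.prod_norm_eq_of_L2]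
  simpa [Function.comp_def, hA] using convexOn_univ_norm.comp_affineMap A

theorem convex_gordon_objective_general {H : Type*} [NormedAddCommGroup H]
    [InnerProductSpace ℝ H] (g : H) (σ : ℝ)
    (ψ : H → ℝ) (hψ : ConvexOn ℝ Set.univ ψ) :
    ConvexOn ℝ Set.univ
      (fun v : H =>
        (1 / 2) * (max (Real.sqrt (‖v‖ ^ 2 + σ ^ 2) - ⟪g, v⟫) 0) ^ 2 + ψ v) := by
  have hpos : ConvexOn ℝ Set.univ fun v : H => max (√(‖v‖ ^ 2 + σ ^ 2) - ⟪g, v⟫) 0 :=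
    ((convexOn_sqrt_norm_sq_add_sq σ).sub ((innerₗ H g).concaveOn convex_univ)).sup
      (convexOn_const 0 convex_univ)
  have hsq := (hpos.pow (fun _ _ => le_max_right _ _) 2).smul (by norm_num : (0 : ℝ) ≤ 1 / 2)
  exact hsq.add hψ

/-- In a real Hilbert space, `v ↦ (1/2)(√(‖v‖² + σ²) − ⟨g, v⟩)₊² + ψ(v)` is
convex whenever `ψ` is convex. -/
theorem convex_gordon_objective {H : Type*} [NormedAddCommGroup H]
    [InnerProductSpace ℝ H] (g : H) (σ : ℝ) (hσ : 0 < σ)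
    (ψ : H → ℝ) (hψ : ConvexOn ℝ Set.univ ψ) :
    ConvexOn ℝ Set.univ
      (fun v : H =>
        (1 / 2) * (max (Real.sqrt (‖v‖ ^ 2 + σ ^ 2) - ⟪g, v⟫) 0) ^ 2 + ψ v) :=
  convex_gordon_objective_general g σ ψ hψ
end

section
/- Let g ∈ ℝ^p, c > 0, σ > 0, and define f(v) = √(‖v‖₂²/n + σ²)·c − ⟨g, v⟩/n for v ∈ ℝ^p. Then the function v ↦ (1/2) f(v)₊² is L/n-strongly smooth (i.e., its gradient is (L/n)-Lipschitz) with L = 2c² + 2‖g‖₂²/n + c² + c‖g‖₂/√n. -/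
open RealInnerProductSpace

/-!
Write `F = ½ f₊²` with `f(v) = r(v) c − ⟪g, v⟫ / n` and `r(v) = √(‖v‖² / n + σ²)`, so that
`∇F = f₊ ∇f` with `∇f(v) = c v / (n r(v)) − g / n`. For `‖x‖ ≤ ‖y‖` split
`∇F(x) − ∇F(y) = f₊(x) (∇f(x) − ∇f(y)) + (f₊(x) − f₊(y)) ∇f(y)`.

Since `r(v)` is the norm of `(v / √n, σ)` in `E × ℝ`, it is `1/√n`-Lipschitz; hence `f` is
`M`-Lipschitz with `M = c/√n + ‖g‖/n`, also `‖∇f‖ ≤ M`, and the second term is at most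
`M² ‖x − y‖ ≤ (2c² + 2‖g‖²/n)/n ‖x − y‖`. In the first term, `f₊(x) ≤ r(x) (c + ‖g‖/√n)` and
`∇f(x) − ∇f(y) = c/(n r(x)) (x − t y)` with `t = r(x)/r(y) ≤ 1` and `‖x‖ ≤ t ‖y‖`, so that
`‖x − t y‖ ≤ ‖x − y‖`; the factor `r(x)` cancels and leaves `(c² + c‖g‖/√n)/n ‖x − y‖`.
-/

theorem hasDerivAt_half_max_zero_sq (t : ℝ) :
    HasDerivAt (fun s : ℝ => 1 / 2 * max s 0 ^ 2) (max t 0) t := by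
  rcases lt_trichotomy t 0 with ht | rfl | ht
  · rw [max_eq_right ht.le]
    refine (hasDerivAt_const t (0 : ℝ)).congr_of_eventuallyEq ?_
    filter_upwards [Iio_mem_nhds ht] with s hs
    simp [max_eq_right (Set.mem_Iio.mp hs).le]
  · rw [max_self, hasDerivAt_iff_isLittleO_nhds_zero]
    refine Asymptotics.IsBigO.trans_isLittleO ?_ (Asymptotics.isLittleO_pow_id one_lt_two)
    refine Asymptotics.IsBigO.of_bound 1 (Filter.Eventually.of_forall fun s => ?_)
    have hsq : max s 0 ^ 2 ≤ s ^ 2 :=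
      sq_le_sq.mpr (by simpa using abs_max_sub_max_le_abs s 0 0)
    simpa using (by linarith [hsq, sq_nonneg (max s 0)] : 2⁻¹ * max s 0 ^ 2 ≤ s ^ 2)
  · rw [max_eq_left ht.le]
    refine ((hasDerivAt_pow 2 t).const_mul (1 / 2 : ℝ)).congr_deriv (by ring)
      |>.congr_of_eventuallyEq ?_
    filter_upwards [Ioi_mem_nhds ht] with s hs
    simp [max_eq_left (Set.mem_Ioi.mp hs).le]

theorem HasGradientAt.half_max_zero_sq {E : Type*} [NormedAddCommGroup E] [InnerProductSpace ℝ E]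
    [CompleteSpace E] {f : E → ℝ} {f' x : E} (hf : HasGradientAt f f' x) :
    HasGradientAt (fun v => 1 / 2 * max (f v) 0 ^ 2) (max (f x) 0 • f') x := by
  rw [hasGradientAt_iff_hasFDerivAt] at hf ⊢
  rw [map_smulₛₗ, conj_trivial]
  exact (hasDerivAt_half_max_zero_sq (f x)).comp_hasFDerivAt x hf

theorem norm_smul_sub_smul_le {𝕜 E : Type*} [NormedField 𝕜] [SeminormedAddCommGroup E]
    [NormedSpace 𝕜 E] (a b : 𝕜) (u w : E) :
    ‖a • u - b • w‖ ≤ ‖a‖ * ‖u - w‖ + ‖a - b‖ * ‖w‖ := by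
  calc ‖a • u - b • w‖ = ‖a • (u - w) + (a - b) • w‖ := by rw [smul_sub, sub_smul]; abel_nf
    _ ≤ ‖a‖ * ‖u - w‖ + ‖a - b‖ * ‖w‖ := by
      refine (norm_add_le _ _).trans_eq ?_
      rw [norm_smul, norm_smul]

theorem norm_sub_smul_le_norm_sub {E : Type*} [NormedAddCommGroup E] [InnerProductSpace ℝ E]
    {x y : E} {t : ℝ} (ht₀ : 0 ≤ t) (ht₁ : t ≤ 1) (hx : ‖x‖ ≤ t * ‖y‖) :
    ‖x - t • y‖ ≤ ‖x - y‖ := by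
  refine le_of_pow_le_pow_left₀ two_ne_zero (norm_nonneg _) ?_
  rw [norm_sub_sq_real, norm_sub_sq_real, real_inner_smul_right, norm_smul,
    Real.norm_of_nonneg ht₀]
  nlinarith [real_inner_le_norm x y, norm_nonneg x, mul_nonneg (sub_nonneg.mpr ht₁) (norm_nonneg y)]

namespace GordonLoss

section Radius

variable {E : Type*} [NormedAddCommGroup E] {n σ : ℝ}

noncomputable def radius (n σ : ℝ) (v : E) : ℝ := √(‖v‖ ^ 2 / n + σ ^ 2)

theorem radius_pos (hn : 0 ≤ n) (hσ : σ ≠ 0) (v : E) : 0 < radius n σ v :=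
  Real.sqrt_pos.mpr (by positivity)

theorem radius_eq_norm_toLp [NormedSpace ℝ E] (hn : 0 ≤ n) (v : E) :
    radius n σ v = ‖WithLp.toLp 2 ((√n)⁻¹ • v, σ)‖ := by
  rw [radius, WithLp.prod_norm_eq_of_L2]
  simp [norm_smul, mul_pow, Real.sq_sqrt hn, div_eq_inv_mul]

theorem abs_radius_sub_radius_le [NormedSpace ℝ E] (hn : 0 ≤ n) (x y : E) :
    |radius n σ x - radius n σ y| ≤ ‖x - y‖ / √n := by
  rw [radius_eq_norm_toLp hn, radius_eq_norm_toLp hn]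
  refine (abs_norm_sub_norm_le _ _).trans_eq ?_
  rw [← WithLp.toLp_sub, Prod.mk_sub_mk, sub_self, ← smul_sub, WithLp.prod_norm_eq_of_L2]
  simp [norm_smul, div_eq_inv_mul, Real.sqrt_sq_eq_abs, abs_mul]

theorem norm_le_sqrt_mul_radius (hn : 0 < n) (v : E) : ‖v‖ ≤ √n * radius n σ v := by
  rw [radius, ← Real.sqrt_mul hn.le, mul_add, mul_div_cancel₀ _ hn.ne']
  exact Real.le_sqrt_of_sq_le (le_add_of_nonneg_right (by positivity))

theorem radius_le_radius (hn : 0 ≤ n) {x y : E} (h : ‖x‖ ≤ ‖y‖) :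
    radius n σ x ≤ radius n σ y := by
  unfold radius
  gcongr

theorem norm_mul_radius_le (hn : 0 ≤ n) {x y : E} (h : ‖x‖ ≤ ‖y‖) :
    ‖x‖ * radius n σ y ≤ ‖y‖ * radius n σ x := by
  refine le_of_pow_le_pow_left₀ two_ne_zero (mul_nonneg (norm_nonneg _) (Real.sqrt_nonneg _)) ?_
  rw [mul_pow, mul_pow, radius, radius, Real.sq_sqrt (by positivity), Real.sq_sqrt (by positivity)]
  have hdiff : ‖y‖ ^ 2 * (‖x‖ ^ 2 / n + σ ^ 2) - ‖x‖ ^ 2 * (‖y‖ ^ 2 / n + σ ^ 2) =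
      (‖y‖ ^ 2 - ‖x‖ ^ 2) * σ ^ 2 := by ring
  rw [← sub_nonneg, hdiff]
  have : ‖x‖ ^ 2 ≤ ‖y‖ ^ 2 := by gcongr
  exact mul_nonneg (sub_nonneg.mpr this) (sq_nonneg σ)

end Radius

variable {E : Type*} [NormedAddCommGroup E] [InnerProductSpace ℝ E] {n σ c : ℝ}

noncomputable def loss (g : E) (n c σ : ℝ) (v : E) : ℝ := radius n σ v * c - ⟪g, v⟫ / n

noncomputable def grad (g : E) (n c σ : ℝ) (v : E) : E := (c / (n * radius n σ v)) • v - n⁻¹ • g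

theorem loss_le (hn : 0 < n) (g : E) (c : ℝ) (x : E) :
    loss g n c σ x ≤ radius n σ x * (c + ‖g‖ / √n) := by
  have hg : -⟪g, x⟫ ≤ ‖g‖ * (√n * radius n σ x) :=
    (neg_le_abs _).trans <| (abs_real_inner_le_norm g x).trans <|
      mul_le_mul_of_nonneg_left (norm_le_sqrt_mul_radius hn x) (norm_nonneg g)
  calc loss g n c σ x = radius n σ x * c + -⟪g, x⟫ / n := by rw [loss]; ring
    _ ≤ radius n σ x * c + ‖g‖ * (√n * radius n σ x) / n := by gcongr
    _ = radius n σ x * (c + ‖g‖ / √n) := by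
      field_simp
      linear_combination radius n σ x * ‖g‖ * Real.sq_sqrt hn.le

theorem abs_loss_sub_loss_le (hn : 0 ≤ n) (hc : 0 ≤ c) (g x y : E) :
    |loss g n c σ x - loss g n c σ y| ≤ (c / √n + ‖g‖ / n) * ‖x - y‖ := by
  calc |loss g n c σ x - loss g n c σ y|
      = |(radius n σ x - radius n σ y) * c - ⟪g, x - y⟫ / n| := by
        rw [loss, loss, inner_sub_right]; ring_nf
    _ ≤ |radius n σ x - radius n σ y| * c + |⟪g, x - y⟫| / n := by
        refine (abs_sub _ _).trans_eq ?_
        rw [abs_mul, abs_div, abs_of_nonneg hc, abs_of_nonneg hn]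
    _ ≤ ‖x - y‖ / √n * c + ‖g‖ * ‖x - y‖ / n := by
        gcongr
        · exact abs_radius_sub_radius_le hn x y
        · exact abs_real_inner_le_norm g (x - y)
    _ = (c / √n + ‖g‖ / n) * ‖x - y‖ := by ring

theorem norm_grad_le (hn : 0 < n) (hσ : σ ≠ 0) (hc : 0 ≤ c) (g v : E) :
    ‖grad g n c σ v‖ ≤ c / √n + ‖g‖ / n := by
  have hr := radius_pos hn.le hσ v
  calc ‖grad g n c σ v‖ ≤ c / (n * radius n σ v) * ‖v‖ + n⁻¹ * ‖g‖ := by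
        refine (norm_sub_le _ _).trans_eq ?_
        rw [norm_smul, norm_smul, Real.norm_of_nonneg (by positivity),
          Real.norm_of_nonneg (by positivity)]
    _ ≤ c / (n * radius n σ v) * (√n * radius n σ v) + n⁻¹ * ‖g‖ := by
        gcongr
        exact norm_le_sqrt_mul_radius hn v
    _ = c / √n + ‖g‖ / n := by
        field_simp
        linear_combination c * Real.sq_sqrt hn.le

theorem norm_grad_sub_grad_le (hn : 0 < n) (hσ : σ ≠ 0) (hc : 0 ≤ c) (g : E) {x y : E}
    (h : ‖x‖ ≤ ‖y‖) :
    ‖grad g n c σ x - grad g n c σ y‖ ≤ c / (n * radius n σ x) * ‖x - y‖ := by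
  have hx := radius_pos hn.le hσ x
  have hy := radius_pos hn.le hσ y
  have hdiff : grad g n c σ x - grad g n c σ y =
      (c / (n * radius n σ x)) • (x - (radius n σ x / radius n σ y) • y) := by
    rw [grad, grad, smul_sub, smul_smul,
      show c / (n * radius n σ x) * (radius n σ x / radius n σ y) = c / (n * radius n σ y) by
        field_simp]
    abel
  have hclose : ‖x - (radius n σ x / radius n σ y) • y‖ ≤ ‖x - y‖ := by
    refine norm_sub_smul_le_norm_sub (by positivity)
      (div_le_one_of_le₀ (radius_le_radius hn.le h) hy.le) ?_
    rw [div_mul_eq_mul_div, le_div_iff₀ hy]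
    linarith [norm_mul_radius_le (σ := σ) hn.le h]
  rw [hdiff, norm_smul, Real.norm_of_nonneg (by positivity)]
  gcongr

theorem hasGradientAt_loss [CompleteSpace E] (hn : 0 < n) (hσ : σ ≠ 0) (g : E) (c : ℝ) (v : E) :
    HasGradientAt (loss g n c σ) (grad g n c σ v) v := by
  have hsq : HasFDerivAt (fun w : E => ‖w‖ ^ 2 / n + σ ^ 2) (n⁻¹ • 2 • innerSL ℝ v) v := by
    simpa [div_eq_inv_mul] using
      ((hasStrictFDerivAt_norm_sq v).hasFDerivAt.const_smul n⁻¹).add_const (σ ^ 2)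
  have hloss : HasFDerivAt (loss g n c σ)
      (c • (1 / (2 * radius n σ v)) • n⁻¹ • 2 • innerSL ℝ v - n⁻¹ • innerSL ℝ g) v :=
    ((hsq.sqrt (by positivity)).mul_const c).sub
      (((innerSL ℝ g).hasFDerivAt (x := v)).mul_const n⁻¹)
  rw [hasGradientAt_iff_hasFDerivAt]
  refine hloss.congr_fderiv ?_
  ext w
  simp [grad]
  field_simp

theorem gradient_half_max_zero_sq_loss [CompleteSpace E] (hn : 0 < n) (hσ : σ ≠ 0) (g : E) (c : ℝ)
    (v : E) :
    gradient (fun w => 1 / 2 * max (loss g n c σ w) 0 ^ 2) v =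
      max (loss g n c σ v) 0 • grad g n c σ v :=
  (hasGradientAt_loss hn hσ g c v).half_max_zero_sq.gradient

theorem norm_smul_grad_sub_smul_grad_le (hn : 0 < n) (hσ : σ ≠ 0) (hc : 0 ≤ c) (g : E) {x y : E}
    (h : ‖x‖ ≤ ‖y‖) :
    ‖max (loss g n c σ x) 0 • grad g n c σ x - max (loss g n c σ y) 0 • grad g n c σ y‖ ≤
      (2 * c ^ 2 + 2 * ‖g‖ ^ 2 / n + c ^ 2 + c * ‖g‖ / √n) / n * ‖x - y‖ := by
  set A := max (loss g n c σ x) 0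
  set B := max (loss g n c σ y) 0
  set M := c / √n + ‖g‖ / n
  have hr := radius_pos hn.le hσ x
  have hA : A ≤ radius n σ x * (c + ‖g‖ / √n) := max_le (loss_le hn g c x) (by positivity)
  have hAB : |A - B| ≤ M * ‖x - y‖ :=
    (abs_max_sub_max_le_abs _ _ _).trans (abs_loss_sub_loss_le hn.le hc g x y)
  have hM : M ^ 2 ≤ (2 * c ^ 2 + 2 * ‖g‖ ^ 2 / n) / n :=
    add_sq_le.trans_eq (by rw [div_pow, div_pow, Real.sq_sqrt hn.le]; ring)
  calc _ ≤ ‖A‖ * ‖grad g n c σ x - grad g n c σ y‖ + ‖A - B‖ * ‖grad g n c σ y‖ :=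
        norm_smul_sub_smul_le _ _ _ _
    _ ≤ radius n σ x * (c + ‖g‖ / √n) * (c / (n * radius n σ x) * ‖x - y‖) +
          M * ‖x - y‖ * M := by
        rw [Real.norm_of_nonneg (le_max_right _ _), Real.norm_eq_abs]
        gcongr
        · exact norm_grad_sub_grad_le hn hσ hc g h
        · exact norm_grad_le hn hσ hc g y
    _ = ((c ^ 2 + c * ‖g‖ / √n) / n + M ^ 2) * ‖x - y‖ := by
        field_simp
    _ ≤ ((c ^ 2 + c * ‖g‖ / √n) / n + (2 * c ^ 2 + 2 * ‖g‖ ^ 2 / n) / n) * ‖x - y‖ := by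
        gcongr
    _ = _ := by ring

theorem norm_gradient_sub_gradient_le [CompleteSpace E] (hn : 0 < n) (hσ : σ ≠ 0) (hc : 0 ≤ c)
    (g x y : E) :
    ‖gradient (fun v => 1 / 2 * max (loss g n c σ v) 0 ^ 2) x -
        gradient (fun v => 1 / 2 * max (loss g n c σ v) 0 ^ 2) y‖ ≤
      (2 * c ^ 2 + 2 * ‖g‖ ^ 2 / n + c ^ 2 + c * ‖g‖ / √n) / n * ‖x - y‖ := by
  simp only [gradient_half_max_zero_sq_loss hn hσ]
  rcases le_total ‖x‖ ‖y‖ with h | h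
  · exact norm_smul_grad_sub_smul_grad_le hn hσ hc g h
  · rw [norm_sub_rev, norm_sub_rev x]
    exact norm_smul_grad_sub_smul_grad_le hn hσ hc g h

end GordonLoss

/-- `v ↦ (1/2) f(v)₊²` with `f(v) = √(‖v‖²/n + σ²)·c − ⟨g, v⟩/n` is
`L/n`-strongly smooth (its gradient is `(L/n)`-Lipschitz) with
`L = 2c² + 2‖g‖²/n + c² + c‖g‖/√n`. -/
theorem gordon_loss_strongly_smooth (p n : ℕ) (hn : 1 ≤ n)
    (g : EuclideanSpace ℝ (Fin p)) (c σ : ℝ) (hc : 0 < c) (hσ : 0 < σ) :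
    ∀ x y : EuclideanSpace ℝ (Fin p),
      ‖gradient (fun v : EuclideanSpace ℝ (Fin p) =>
            (1 / 2) *
              (max (Real.sqrt (‖v‖ ^ 2 / n + σ ^ 2) * c - ⟪g, v⟫ / n) 0) ^ 2) x -
          gradient (fun v : EuclideanSpace ℝ (Fin p) =>
            (1 / 2) *
              (max (Real.sqrt (‖v‖ ^ 2 / n + σ ^ 2) * c - ⟪g, v⟫ / n) 0) ^ 2) y‖ ≤
        ((2 * c ^ 2 + 2 * ‖g‖ ^ 2 / n + c ^ 2 + c * ‖g‖ / Real.sqrt n) / n) *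
          ‖x - y‖ :=
  GordonLoss.norm_gradient_sub_gradient_le (Nat.cast_pos.mpr hn) hσ.ne' hc.le g
end

section
/- Let h : ℝ → ℝ satisfy h(x₂) − h(x₁) ≥ c(x₂ − x₁) for all x₁ < x₂, where c > 0, and let G ~ N(0, s²) with s > 0. Then the random variable h(G) has a density with respect to Lebesgue measure that is bounded above by 1/(√(2π)·s·c). -/
open MeasureTheory ProbabilityTheory ENNReal

/-- If `h : ℝ → ℝ` grows at rate at least `c > 0` and `G ~ N(0, s²)`, then the
law of `h(G)` has density (w.r.t. Lebesgue measure) bounded by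
`1/(√(2π)·s·c)`: equivalently, it assigns every measurable set `A` mass at
most `volume A / (√(2π)·s·c)`. -/
theorem density_bound_of_growth (h : ℝ → ℝ) (c s : ℝ) (hc : 0 < c) (hs : 0 < s)
    (hh : ∀ x₁ x₂ : ℝ, x₁ < x₂ → c * (x₂ - x₁) ≤ h x₂ - h x₁) :
    ∀ A : Set ℝ, MeasurableSet A →
      (Measure.map h (gaussianReal 0 (Real.toNNReal (s ^ 2)))) A ≤
        ENNReal.ofReal (1 / (Real.sqrt (2 * Real.pi) * s * c)) * volume A := by
  intro A hA
  set v : NNReal := Real.toNNReal (s ^ 2) with hv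
  have hv0 : v ≠ 0 := by
    simp only [hv, ne_eq, Real.toNNReal_eq_zero, not_le]
    positivity
  -- h is strictly monotone, hence measurable and injective
  have hsm : StrictMono h := by
    intro x y hxy
    have := hh x y hxy
    nlinarith
  have hmeas : Measurable h := hsm.monotone.measurable
  have hinj : Function.Injective h := hsm.injective
  -- step 1: map
  rw [Measure.map_apply hmeas hA]
  -- step 2: volume of preimage bound via Lipschitz inverse
  have hlip : LipschitzOnWith (Real.toNNReal c)⁻¹ (Function.invFun h) (Set.range h) := by
    intro y₁ hy₁ y₂ hy₂
    obtain ⟨x₁, rfl⟩ := hy₁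
    obtain ⟨x₂, rfl⟩ := hy₂
    rw [Function.leftInverse_invFun hinj, Function.leftInverse_invFun hinj]
    rw [edist_dist, edist_dist, Real.dist_eq, Real.dist_eq]
    rw [← ENNReal.ofReal_coe_nnreal, ← ENNReal.ofReal_mul (by positivity),
      ENNReal.ofReal_le_ofReal_iff (by positivity)]
    have key : ∀ a b : ℝ, a < b → |a - b| ≤ ((Real.toNNReal c)⁻¹ : NNReal) * |h a - h b| := by
      intro a b hab
      have h1 := hh a b hab
      have h2 : (Real.toNNReal c : ℝ) = c := Real.coe_toNNReal c hc.le
      have h3 : h a < h b := hsm hab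
      rw [abs_sub_comm a b, abs_of_pos (by linarith), abs_sub_comm (h a), abs_of_pos (by linarith)]
      rw [NNReal.coe_inv, h2]
      rw [inv_mul_eq_div, le_div_iff₀ hc]
      linarith
    rcases lt_trichotomy x₁ x₂ with hlt | heq | hgt
    · exact key x₁ x₂ hlt
    · simp [heq]
    · rw [abs_sub_comm x₁ x₂, abs_sub_comm (h x₁)]; exact key x₂ x₁ hgt
  have hpre : h ⁻¹' A = Function.invFun h '' (A ∩ Set.range h) := by
    ext x
    constructor
    · intro hx
      exact ⟨h x, ⟨hx, ⟨x, rfl⟩⟩, Function.leftInverse_invFun hinj x⟩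
    · rintro ⟨y, ⟨hyA, x', rfl⟩, rfl⟩
      rw [Function.leftInverse_invFun hinj]
      exact hyA
  have hvolpre : volume (h ⁻¹' A) ≤ ENNReal.ofReal (1 / c) * volume A := by
    calc volume (h ⁻¹' A) = μH[1] (Function.invFun h '' (A ∩ Set.range h)) := by
          rw [MeasureTheory.hausdorffMeasure_real, hpre]
      _ ≤ (↑((Real.toNNReal c)⁻¹) : ℝ≥0∞) ^ (1 : ℝ) * μH[1] (A ∩ Set.range h) :=
          (hlip.mono Set.inter_subset_right).hausdorffMeasure_image_le zero_le_one
      _ ≤ ENNReal.ofReal (1 / c) * volume A := by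
          rw [ENNReal.rpow_one, MeasureTheory.hausdorffMeasure_real]
          gcongr
          · apply le_of_eq
            rw [one_div, ENNReal.ofReal_inv_of_pos hc,
              ENNReal.coe_inv (ne_of_gt (Real.toNNReal_pos.mpr hc))]
            rfl
          · exact Set.inter_subset_left
  -- step 3: gaussian density bound
  have hsqv : Real.sqrt (2 * Real.pi * v) = Real.sqrt (2 * Real.pi) * s := by
    rw [hv, Real.coe_toNNReal _ (by positivity)]
    rw [Real.sqrt_mul (by positivity), Real.sqrt_sq hs.le]
  have hbound : ∀ x, gaussianPDF 0 v x ≤ ENNReal.ofReal (1 / (Real.sqrt (2 * Real.pi) * s)) := by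
    intro x
    rw [gaussianPDF, ENNReal.ofReal_le_ofReal_iff (by positivity)]
    rw [gaussianPDFReal, hsqv]
    calc (Real.sqrt (2 * Real.pi) * s)⁻¹ * Real.exp (-(x - 0) ^ 2 / (2 * v))
        ≤ (Real.sqrt (2 * Real.pi) * s)⁻¹ * 1 := by
          gcongr
          exact Real.exp_le_one_iff.mpr (div_nonpos_of_nonpos_of_nonneg
              (by nlinarith [sq_nonneg (x - 0)]) (by positivity))
      _ = 1 / (Real.sqrt (2 * Real.pi) * s) := by rw [mul_one, one_div]
  calc (gaussianReal 0 v) (h ⁻¹' A) = ∫⁻ x in h ⁻¹' A, gaussianPDF 0 v x :=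
        gaussianReal_apply 0 hv0 _
    _ ≤ ∫⁻ _ in h ⁻¹' A, ENNReal.ofReal (1 / (Real.sqrt (2 * Real.pi) * s)) :=
        lintegral_mono fun x => hbound x
    _ = ENNReal.ofReal (1 / (Real.sqrt (2 * Real.pi) * s)) * volume (h ⁻¹' A) := by
        rw [setLIntegral_const, mul_comm]
    _ ≤ ENNReal.ofReal (1 / (Real.sqrt (2 * Real.pi) * s)) *
        (ENNReal.ofReal (1 / c) * volume A) := by gcongr
    _ = ENNReal.ofReal (1 / (Real.sqrt (2 * Real.pi) * s * c)) * volume A := by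
        rw [← mul_assoc, ← ENNReal.ofReal_mul (by positivity)]
        congr 2
        field_simp
end
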